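/- Let α be a badly approximable real number and let 1 < θ < θ' be real constants. Then for every real δ with 0 < δ ≤ 1/2, the sum over all positive integers m with ‖mα‖ ≥ δ of 1/(m^θ ‖mα‖^{θ'}) is O(δ^{θ−θ'}), with implied constant depending only on α, θ, θ'. -/

import Mathlib

/-!
Sort the `m` with `‖mα‖ ≥ δ` into dyadic levels `2^k δ ≤ ‖mα‖ < 2^(k+1) δ`. Two members
`m < m'` of level `k` satisfy `‖(m' - m)α‖ < 2^(k+2) δ`, so bad approximability with constant `C`
forces `m' - m > d_k := C / (2^(k+2) δ)`. Hence `m ↦ (k, ⌊m / d_k⌋)` is injective, and the rank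
`j = ⌊m / d_k⌋ ≥ 1` satisfies `m ≥ j d_k`, which bounds the term of `m` by
`(4/C)^θ δ^(θ-θ') · (2^(θ-θ'))^k · j^(-θ)`. These bounds are summable over all `(k, j)`
since `θ' > θ > 1`.
-/

open scoped Real

/-- Distance from a real number to the nearest integer. -/
noncomputable def nd (x : ℝ) : ℝ := |x - round x|

/-- A real number is badly approximable if `‖qα‖ ≥ C/q` for all positive integers `q`. -/
def BadlyApprox (α : ℝ) : Prop := ∃ C > 0, ∀ q : ℕ, 0 < q → C / q ≤ nd (q * α)

lemma nd_sub_le (a b : ℝ) : nd (a - b) ≤ nd a + nd b :=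
  calc nd (a - b) ≤ |a - b - ((round a - round b : ℤ) : ℝ)| := round_le _ _
    _ = |(a - round a) - (b - round b)| := by push_cast; ring_nf
    _ ≤ nd a + nd b := abs_sub _ _

lemma nd_nonneg (x : ℝ) : 0 ≤ nd x := abs_nonneg _

section Floor

variable {R : Type*} [Semifield R] [LinearOrder R] [FloorSemiring R]

lemma Nat.pow_log_floor_le [IsStrictOrderedRing R] (b : ℕ) {x : R} (hx : 1 ≤ x) :
    (b : R) ^ Nat.log b ⌊x⌋₊ ≤ x := by
  rw [← Nat.cast_pow, ← Nat.le_floor_iff (zero_le_one.trans hx)]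
  exact Nat.pow_log_le_self b (Nat.floor_pos.mpr hx).ne'

lemma Nat.lt_pow_succ_log_floor {b : ℕ} (hb : 1 < b) (x : R) :
    x < (b : R) ^ (Nat.log b ⌊x⌋₊ + 1) := by
  exact_mod_cast Nat.lt_of_floor_lt (Nat.lt_pow_succ_log_self hb _)

lemma Nat.floor_div_lt_floor_div_of_add_le [IsStrictOrderedRing R] {x y d : R} (hx : 0 ≤ x)
    (hd : 0 < d) (h : x + d ≤ y) : ⌊x / d⌋₊ < ⌊y / d⌋₊ := by
  have : x / d + 1 ≤ y / d := by rwa [div_add_one hd.ne', div_le_div_iff_of_pos_right hd]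
  rw [Nat.lt_iff_add_one_le, ← Nat.floor_add_one (div_nonneg hx hd.le)]
  exact Nat.floor_le_floor this

end Floor

lemma one_div_rpow_mul_rpow_le {m ν X c j θ θ' : ℝ} (hθ : 0 ≤ θ) (hθ' : 0 ≤ θ') (hX : 0 < X)
    (hXν : X ≤ ν) (hc : 0 < c) (hj : 0 < j) (hjm : j * (c / X) ≤ m) :
    1 / (m ^ θ * ν ^ θ') ≤ c⁻¹ ^ θ * X ^ (θ - θ') * j ^ (-θ) := by
  have hm : 0 < m := lt_of_lt_of_le (by positivity) hjm
  calc 1 / (m ^ θ * ν ^ θ') ≤ 1 / ((j * (c / X)) ^ θ * X ^ θ') := by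
        gcongr
    _ = c⁻¹ ^ θ * X ^ (θ - θ') * j ^ (-θ) := by
        rw [Real.mul_rpow hj.le (by positivity), Real.div_rpow hc.le hX.le, Real.rpow_neg hj.le,
          Real.rpow_sub hX, Real.inv_rpow hc.le]
        field_simp

lemma tsum_le_tsum_of_le_comp_injective {ι κ : Type*} {f : ι → ℝ} {g : κ → ℝ} (e : ι → κ)
    (he : Function.Injective e) (hf : ∀ i, 0 ≤ f i) (hfg : ∀ i, f i ≤ g (e i)) (hg : Summable g)
    (hg0 : ∀ k, 0 ≤ g k) : ∑' i, f i ≤ ∑' k, g k :=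
  ((hg.comp_injective he).of_nonneg_of_le hf hfg).tsum_le_tsum_of_inj e he (fun k _ => hg0 k)
    hfg hg

lemma summable_geometric_mul_rpow_neg {r θ : ℝ} (hr₀ : 0 ≤ r) (hr₁ : r < 1) (hθ : 1 < θ) :
    Summable fun p : ℕ × ℕ => r ^ p.1 * (p.2 : ℝ) ^ (-θ) :=
  (summable_geometric_of_lt_one hr₀ hr₁).mul_of_nonneg (Real.summable_nat_rpow.2 (by linarith))
    (fun _ => by positivity) (fun _ => by positivity)

section Level

variable {α C δ : ℝ}

noncomputable def level (α δ : ℝ) (m : ℕ) : ℕ := Nat.log 2 ⌊nd (m * α) / δ⌋₊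

lemma two_pow_level_mul_le (hδ : 0 < δ) {m : ℕ} (hm : δ ≤ nd (m * α)) :
    2 ^ level α δ m * δ ≤ nd (m * α) := by
  have := Nat.pow_log_floor_le 2 ((one_le_div hδ).2 hm)
  rwa [Nat.cast_ofNat, le_div_iff₀ hδ] at this

lemma lt_two_pow_level_succ_mul (hδ : 0 < δ) (m : ℕ) :
    nd (m * α) < 2 ^ (level α δ m + 1) * δ := by
  have := Nat.lt_pow_succ_log_floor one_lt_two (nd (m * α) / δ)
  rwa [Nat.cast_ofNat, div_lt_iff₀ hδ] at this

noncomputable def levelGap (C δ : ℝ) (k : ℕ) : ℝ := C / 4 / (2 ^ k * δ)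

lemma levelGap_pos (hC : 0 < C) (hδ : 0 < δ) (k : ℕ) : 0 < levelGap C δ k := by
  unfold levelGap; positivity

lemma levelGap_le (hδ : 0 < δ) {m : ℕ} (hm : 0 < m) (hCm : C / m ≤ nd (m * α)) :
    levelGap C δ (level α δ m) ≤ m := by
  have hm' : (0 : ℝ) < m := by exact_mod_cast hm
  have h := lt_two_pow_level_succ_mul (α := α) hδ m
  rw [div_le_iff₀ hm'] at hCm
  rw [pow_succ] at h
  rw [levelGap, div_div, div_le_iff₀ (by positivity)]
  have : 0 < 2 ^ level α δ m * δ * m := by positivity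
  nlinarith [mul_lt_mul_of_pos_right h hm']

lemma levelGap_lt_sub (hδ : 0 < δ) (hbad : ∀ q : ℕ, 0 < q → C / q ≤ nd (q * α)) {m m' : ℕ}
    (hlt : m < m') (hk : level α δ m = level α δ m') :
    levelGap C δ (level α δ m) < (m' : ℝ) - m := by
  have hq : (0 : ℝ) < (m' : ℝ) - m := by
    rw [sub_pos]; exact_mod_cast hlt
  have hsum : nd (((m' : ℝ) - m) * α) < 4 * (2 ^ level α δ m * δ) := by
    have h := lt_two_pow_level_succ_mul (α := α) hδ m
    have h' := lt_two_pow_level_succ_mul (α := α) hδ m'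
    rw [← hk] at h'
    calc nd (((m' : ℝ) - m) * α) = nd (m' * α - m * α) := by rw [sub_mul]
      _ ≤ nd (m' * α) + nd (m * α) := nd_sub_le _ _
      _ < 4 * (2 ^ level α δ m * δ) := by rw [pow_succ] at h h'; linarith
  have hb := hbad (m' - m) (Nat.sub_pos_of_lt hlt)
  rw [Nat.cast_sub hlt.le] at hb
  rw [levelGap, div_div, div_lt_iff₀ (by positivity)]
  rw [div_le_iff₀ hq] at hb
  nlinarith

noncomputable def levelRank (α C δ : ℝ) (m : ℕ) : ℕ := ⌊m / levelGap C δ (level α δ m)⌋₊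

lemma injective_level_levelRank (hC : 0 < C) (hδ : 0 < δ)
    (hbad : ∀ q : ℕ, 0 < q → C / q ≤ nd (q * α)) :
    Function.Injective fun m => (level α δ m, levelRank α C δ m) := by
  suffices h : ∀ m m', m < m' → level α δ m = level α δ m' →
      levelRank α C δ m < levelRank α C δ m' by
    intro m m' hmm'
    simp only [Prod.mk.injEq] at hmm'
    rcases lt_trichotomy m m' with hlt | heq | hgt
    · exact absurd hmm'.2 (h m m' hlt hmm'.1).ne
    · exact heq
    · exact absurd hmm'.2 (h m' m hgt hmm'.1.symm).ne'
  intro m m' hlt hk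
  unfold levelRank
  rw [← hk]
  refine Nat.floor_div_lt_floor_div_of_add_le (Nat.cast_nonneg m) (levelGap_pos hC hδ _) ?_
  linarith [levelGap_lt_sub hδ hbad hlt hk]

lemma one_div_rpow_mul_nd_rpow_le (hC : 0 < C) (hδ : 0 < δ) {θ θ' : ℝ} (hθ : 0 ≤ θ)
    (hθ' : 0 ≤ θ') {m : ℕ} (hm : 0 < m) (hδm : δ ≤ nd (m * α)) (hCm : C / m ≤ nd (m * α)) :
    1 / ((m : ℝ) ^ θ * nd (m * α) ^ θ') ≤ (C / 4)⁻¹ ^ θ * δ ^ (θ - θ') *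
      ((2 ^ (θ - θ')) ^ level α δ m * (levelRank α C δ m : ℝ) ^ (-θ)) := by
  have hgap := levelGap_pos hC hδ (level α δ m)
  have hrank : 1 ≤ levelRank α C δ m :=
    Nat.le_floor (by rw [Nat.cast_one, one_le_div hgap]; exact levelGap_le hδ hm hCm)
  have hrank_mul : (levelRank α C δ m : ℝ) * levelGap C δ (level α δ m) ≤ m :=
    (le_div_iff₀ hgap).1 (Nat.floor_le (by positivity))
  have hX : (2 : ℝ) ^ level α δ m * δ ≤ nd (m * α) := two_pow_level_mul_le hδ hδm
  calc 1 / ((m : ℝ) ^ θ * nd (m * α) ^ θ')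
      ≤ (C / 4)⁻¹ ^ θ * (2 ^ level α δ m * δ) ^ (θ - θ') * (levelRank α C δ m : ℝ) ^ (-θ) :=
        one_div_rpow_mul_rpow_le hθ hθ' (by positivity) hX (by positivity)
          (by exact_mod_cast hrank) hrank_mul
    _ = _ := by
        rw [Real.mul_rpow (by positivity) hδ.le, ← Real.rpow_pow_comm zero_le_two]
        ring

end Level

lemma tsum_le_of_badlyApprox {α C δ θ θ' : ℝ} (hC : 0 < C)
    (hbad : ∀ q : ℕ, 0 < q → C / q ≤ nd (q * α)) (hδ : 0 < δ) (hθ : 1 < θ) (hθθ' : θ < θ') :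
    (∑' m : ℕ, if 0 < m ∧ δ ≤ nd (m * α) then 1 / ((m : ℝ) ^ θ * nd (m * α) ^ θ') else 0) ≤
      (C / 4)⁻¹ ^ θ * δ ^ (θ - θ') *
        ∑' p : ℕ × ℕ, ((2 : ℝ) ^ (θ - θ')) ^ p.1 * (p.2 : ℝ) ^ (-θ) := by
  have hr : (2 : ℝ) ^ (θ - θ') < 1 := Real.rpow_lt_one_of_one_lt_of_neg one_lt_two (by linarith)
  rw [← tsum_mul_left]
  refine tsum_le_tsum_of_le_comp_injective _ (injective_level_levelRank hC hδ hbad)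
    (fun m => by have := nd_nonneg (m * α); split_ifs <;> positivity) (fun m => ?_)
    ((summable_geometric_mul_rpow_neg (by positivity) hr hθ).mul_left _) (fun p => by positivity)
  split_ifs with hm
  · exact one_div_rpow_mul_nd_rpow_le hC hδ (by linarith) (by linarith) hm.1 hm.2 (hbad m hm.1)
  · positivity

theorem stmt1 (α : ℝ) (hα : BadlyApprox α) (θ θ' : ℝ) (hθ : 1 < θ) (hθ' : θ < θ') :
    ∃ K > 0, ∀ δ : ℝ, 0 < δ → δ ≤ 1 / 2 →
      (∑' m : ℕ, if 0 < m ∧ δ ≤ nd (m * α) then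
          1 / ((m : ℝ) ^ θ * nd (m * α) ^ θ') else 0) ≤ K * δ ^ (θ - θ') := by
  obtain ⟨C, hC, hbad⟩ := hα
  have hr : (2 : ℝ) ^ (θ - θ') < 1 := Real.rpow_lt_one_of_one_lt_of_neg one_lt_two (by linarith)
  have hsum_pos : 0 < ∑' p : ℕ × ℕ, ((2 : ℝ) ^ (θ - θ')) ^ p.1 * (p.2 : ℝ) ^ (-θ) :=
    (summable_geometric_mul_rpow_neg (by positivity) hr hθ).tsum_pos (fun _ => by positivity)
      (0, 1) (by simp)
  refine ⟨(C / 4)⁻¹ ^ θ * ∑' p : ℕ × ℕ, ((2 : ℝ) ^ (θ - θ')) ^ p.1 * (p.2 : ℝ) ^ (-θ),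
    by positivity, fun δ hδ _ => ?_⟩
  calc _ ≤ _ := tsum_le_of_badlyApprox hC hbad hδ hθ hθ'
    _ = _ := by ring
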